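/- arXiv:1411.0456 — 3 statements merged into one kernel-verified Lean document; each statement's English description precedes it below -/
import Mathlib

section
/- Let p be a prime and e, N, fe positive integers with e ≤ p^fe·(p−1). Let s be an integer with s > ⌊N/e⌋. Then for any integer j with 0 < j < p^(s−⌊N/e⌋), we have e·(α(j)+α(p^s−j)−1)/(p−1) ≥ N, where α(n) denotes the sum of the digits of n in base p. -/
/-- Sum of the digits of `n` in base `p`. -/
def digitSum (p n : ℕ) : ℕ := (Nat.digits p n).sum

theorem stmt0 (p e N fe s : ℕ) (hp : p.Prime) (he : 0 < e) (hN : 0 < N) (hfe : 0 < fe)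
    (hfe2 : e ≤ p ^ fe * (p - 1)) (hs : N / e < s)
    (j : ℕ) (hj : 0 < j) (hj2 : j < p ^ (s - N / e)) :
    N * (p - 1) ≤ e * (digitSum p j + digitSum p (p ^ s - j) - 1) := by
  haveI : Fact p.Prime := ⟨hp⟩
  have hp1 : 1 < p := hp.one_lt
  have hjps : j ≤ p ^ s :=
    le_of_lt (lt_of_lt_of_le hj2 (Nat.pow_le_pow_right hp.pos (Nat.sub_le _ _)))
  -- digit sum of p^s is 1
  have hds : (Nat.digits p (p ^ s)).sum = 1 := by
    have h0 : Nat.digits p (p ^ s * 1) = List.replicate s 0 ++ Nat.digits p 1 :=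
      Nat.digits_base_pow_mul hp1 one_pos
    simp only [mul_one] at h0
    have h1 : Nat.digits p 1 = [1] := by
      rw [Nat.digits_def' hp1 one_pos, Nat.mod_eq_of_lt hp1, Nat.div_eq_of_lt hp1]
      simp
    simp [h0, h1, List.sum_replicate]
  -- Kummer's theorem
  have hkum := sub_one_mul_padicValNat_choose_eq_sub_sum_digits (p := p) hjps
  -- valuation of the binomial coefficient
  set m := multiplicity p j with hm
  have hmd : p ^ m ∣ j := pow_multiplicity_dvd p j
  have hmlt : m < s - N / e := by
    by_contra h
    push_neg at h
    have : p ^ (s - N / e) ≤ p ^ m := Nat.pow_le_pow_right hp.pos h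
    have : p ^ (s - N / e) ≤ j := le_trans this (Nat.le_of_dvd hj hmd)
    omega
  have hval : padicValNat p ((p ^ s).choose j) = s - m := by
    have h1 := Nat.Prime.emultiplicity_choose_prime_pow hp hjps hj.ne'
    have h2 : padicValNat p ((p ^ s).choose j) = emultiplicity p ((p ^ s).choose j) :=
      padicValNat_eq_emultiplicity (Nat.choose_pos hjps).ne'
    rw [h1] at h2
    exact_mod_cast h2
  have hNe : N < e * (N / e + 1) := by
    have h1 := Nat.div_add_mod N e
    have h2 : N % e < e := Nat.mod_lt _ he
    nlinarith
  have hvge : N / e + 1 ≤ s - m := by omega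
  have hNv : N ≤ e * (s - m) :=
    le_trans hNe.le (Nat.mul_le_mul_left e hvge)
  have key : (p - 1) * (s - m) = digitSum p j + digitSum p (p ^ s - j) - 1 := by
    simp only [digitSum]; rw [← hval, hkum, hds]
  calc N * (p - 1) ≤ e * (s - m) * (p - 1) := Nat.mul_le_mul_right _ hNv
    _ = e * ((p - 1) * (s - m)) := by ring
    _ = e * (digitSum p j + digitSum p (p ^ s - j) - 1) := by rw [key]
end

section
/- Let p be a prime, e ≥ 1, fe the minimal natural number with e ≤ p^fe(p−1), and m, N integers with m ≥ 2N + fe + 1 and N ≥ 1. Then for any integer l with |l| ≥ p^(m−fe−⌊(N+1)/e⌋), the quantity c = l − e·(q − α(q))/(p−1) with q = ⌊l/p^m⌋ satisfies c ≥ N + 1. -/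
/-! Legendre's formula gives `(p - 1) v_p(q!) ≤ q`, so `e v_p(q!) ≤ p ^ fe q ≤ l / p ^ (m - fe)`,
and `m - fe ≥ N + 1` makes this at most `l / 2 ^ (N + 1)`. Since `l ≥ p ^ N ≥ 2 ^ N`, removing
`l / 2 ^ (N + 1)` from `l` still leaves at least `2 ^ N ≥ N + 1`. -/

theorem mul_padicValNat_factorial_le {p e a : ℕ} [Fact p.Prime] (h : e ≤ a * (p - 1)) (q : ℕ) :
    e * padicValNat p q.factorial ≤ a * q := by
  have hp : 0 < p - 1 := Nat.sub_pos_of_lt (Fact.out : p.Prime).one_lt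
  refine Nat.le_of_mul_le_mul_left ?_ hp
  calc (p - 1) * (e * padicValNat p q.factorial)
      = e * ((p - 1) * padicValNat p q.factorial) := by ring
    _ = e * (q - (p.digits q).sum) := by rw [sub_one_mul_padicValNat_factorial]
    _ ≤ a * (p - 1) * q := Nat.mul_le_mul h (Nat.sub_le _ _)
    _ = (p - 1) * (a * q) := by ring

theorem Nat.mul_div_mul_le_div (a b l : ℕ) : a * (l / (b * a)) ≤ l / b := by
  rw [← Nat.div_div_eq_div_mul]
  exact Nat.mul_div_le _ _

theorem Nat.two_pow_le_sub_div_two_pow_succ {N l : ℕ} (h : 2 ^ N ≤ l) :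
    2 ^ N ≤ l - l / 2 ^ (N + 1) := by
  have hdiv : l / 2 ^ (N + 1) * (2 * 2 ^ N) ≤ l := by
    rw [← pow_succ']; exact Nat.div_mul_le_self l _
  generalize l / 2 ^ (N + 1) = t at hdiv ⊢
  have hs : 0 < 2 ^ N := by positivity
  generalize 2 ^ N = s at h hs hdiv ⊢
  rcases Nat.eq_zero_or_pos t with h0 | h0
  · omega
  · have : s ≤ t * s := Nat.le_mul_of_pos_left s h0
    have : t ≤ t * s := Nat.le_mul_of_pos_right t hs
    have : t * (2 * s) = t * s + t * s := by ring
    omega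

theorem stmt4_general (p e fe m N l : ℕ) (hp : p.Prime)
    (hfe : e ≤ p ^ fe * (p - 1))
    (hm : 2 * N + fe + 1 ≤ m)
    (hl : p ^ (m - fe - (N + 1) / e) ≤ l) :
    (N : ℤ) + 1 ≤ (l : ℤ) - e * padicValNat p (Nat.factorial (l / p ^ m)) := by
  have : Fact p.Prime := ⟨hp⟩
  have hp2 : 2 ≤ p := hp.two_le
  have hval : e * padicValNat p (l / p ^ m).factorial ≤ l / 2 ^ (N + 1) :=
    calc e * padicValNat p (l / p ^ m).factorial
        ≤ p ^ fe * (l / (p ^ (m - fe) * p ^ fe)) := by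
          rw [← pow_add, Nat.sub_add_cancel (by omega)]
          exact mul_padicValNat_factorial_le hfe _
      _ ≤ l / p ^ (m - fe) := Nat.mul_div_mul_le_div _ _ _
      _ ≤ l / 2 ^ (N + 1) := Nat.div_le_div_left
          ((Nat.pow_le_pow_left hp2 _).trans (Nat.pow_le_pow_right hp.pos (by omega)))
          (by positivity)
  have hlN : 2 ^ N ≤ l :=
    calc 2 ^ N ≤ p ^ N := Nat.pow_le_pow_left hp2 _
      _ ≤ p ^ (m - fe - (N + 1) / e) :=
          Nat.pow_le_pow_right hp.pos (by have := Nat.div_le_self (N + 1) e; omega)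
      _ ≤ l := hl
  have hrest := Nat.two_pow_le_sub_div_two_pow_succ hlN
  have hN2 : N < 2 ^ N := Nat.lt_two_pow_self
  omega

theorem stmt4 (p e fe m N l : ℕ) (hp : p.Prime) (he : 1 ≤ e)
    (hfe : e ≤ p ^ fe * (p - 1)) (hmin : ∀ n : ℕ, e ≤ p ^ n * (p - 1) → fe ≤ n)
    (hN : 1 ≤ N) (hm : 2 * N + fe + 1 ≤ m)
    (hl : p ^ (m - fe - (N + 1) / e) ≤ l) :
    (N : ℤ) + 1 ≤ (l : ℤ) - e * padicValNat p (Nat.factorial (l / p ^ m)) :=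
  stmt4_general p e fe m N l hp hfe hm hl
end

section
/- Let F be a coherent sheaf on a Noetherian scheme which is reflexive (F ≅ F**) over a regular scheme flat over a DVR with uniformizer ϖ, satisfying Serre's condition S₂. Then F/ϖF satisfies Serre's condition S₁, and hence F/ϖF is torsion-free. -/
/-- Serre's condition `S_n` for a module `M` over a commutative ring `R`, expressed via
regular sequences: for every prime `p` in the support of `M`, there is an `M`-regular
sequence inside `p` of length `min n (dim M_p)`, where `dim M_p` is the height of `p`
in the support of `M`. -/
def SerreCondSn (n : ℕ) (R : Type*) [CommRing R] (M : Type*) [AddCommGroup M]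
    [Module R M] : Prop :=
  ∀ (p : PrimeSpectrum R) (hp : Module.annihilator R M ≤ p.asIdeal),
    ∃ rs : List R,
      (rs.length : ℕ∞) =
        min (n : ℕ∞)
          (Order.height
            (⟨p, hp⟩ : {q : PrimeSpectrum R // Module.annihilator R M ≤ q.asIdeal})) ∧
      (∀ r ∈ rs, r ∈ p.asIdeal) ∧ RingTheory.Sequence.IsRegular M rs

/-!
Everything follows once every associated prime of `M/ϖM` is known to be the prime `(ϖ)`: then
`M/ϖM` has no embedded primes (`S₁`) and every element outside `(ϖ)` acts regularly on it.
Suppose `q = ann(m̄)` were an associated prime strictly containing `(ϖ)`. Reflexivity of `M`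
forces `ann M ⊆ (ϖ)`, and a minimal prime of `Supp M` below `(ϖ)` cannot contain the
`M`-regular element `ϖ`, so `q` has height at least `2` in `Supp M`. Then `S₂` provides an
`M`-regular pair `x, y ∈ q`, and `x m, y m ∈ ϖM` forces `m ∈ ϖM`.
-/

open Pointwise RingTheory.Sequence

section

variable {R M : Type*} [CommRing R] [AddCommGroup M] [Module R M]

lemma mem_span_singleton_smul_top_iff {r : R} {m : M} :
    m ∈ (Ideal.span {r} • ⊤ : Submodule R M) ↔ ∃ m', r • m' = m := by
  simp [Submodule.ideal_span_singleton_smul, Submodule.mem_smul_pointwise_iff_exists]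

lemma isSMulRegular_of_forall_isAssociatedPrime_eq [IsNoetherianRing R] {P : Ideal R}
    (hAss : ∀ q, IsAssociatedPrime q M → q = P) {r : R} (hr : r ∉ P) : IsSMulRegular M r := by
  by_contra hreg
  have : r ∈ ⋃ q ∈ associatedPrimes R M, (q : Set R) := by
    rw [biUnion_associatedPrimes_eq_compl_regular]
    exact hreg
  obtain ⟨q, hq, hrq⟩ := Set.mem_iUnion₂.mp this
  exact hr (hAss q hq ▸ hrq)

lemma top_ne_ideal_smul_of_annihilator_le [Module.Finite R M] {p : Ideal R} [p.IsPrime]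
    {I : Ideal R} (hM : Module.annihilator R M ≤ p) (hI : I ≤ p) :
    ⊤ ≠ I • (⊤ : Submodule R M) := by
  intro h
  have hp : (⟨p, inferInstance⟩ : PrimeSpectrum R) ∈
      Module.support R (M ⧸ I • (⊤ : Submodule R M)) := by
    rw [Module.support_quotient]
    exact ⟨Module.mem_support_iff_of_finite.mpr hM, hI⟩
  have : Subsingleton (M ⧸ I • (⊤ : Submodule R M)) := by
    rw [← h]; infer_instance
  simp [Module.support_eq_empty] at hp

lemma serreCondSn_one_of_forall_isAssociatedPrime_eq [IsNoetherianRing R] [Module.Finite R M]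
    {P : Ideal R} (hAss : ∀ q, IsAssociatedPrime q M → q = P) : SerreCondSn 1 R M := by
  intro p hp
  by_cases hmin :
    IsMin (⟨p, hp⟩ : {q : PrimeSpectrum R // Module.annihilator R M ≤ q.asIdeal})
  · refine ⟨[], by simp [Order.height_eq_zero.mpr hmin], by simp, IsWeaklyRegular.nil R M, ?_⟩
    rw [Ideal.ofList_nil]
    exact top_ne_ideal_smul_of_annihilator_le hp bot_le
  obtain ⟨⟨c, hc⟩, hcp⟩ := not_isMin_iff.mp hmin
  obtain ⟨q, hqmin, hqc⟩ := Ideal.exists_minimalPrimes_le hc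
  have hPc : P ≤ c.asIdeal := hAss q
    (Module.associatedPrimes.minimalPrimes_annihilator_subset_associatedPrimes R M hqmin) ▸ hqc
  obtain ⟨r, hrp, hrc⟩ := SetLike.exists_of_lt (show c.asIdeal < p.asIdeal from hcp)
  refine ⟨[r], ?_, by simpa using hrp, ?_, top_ne_ideal_smul_of_annihilator_le hp ?_⟩
  · rw [Nat.cast_one, min_eq_left (Order.one_le_iff_ne_zero.mpr (Order.height_ne_zero.mpr hmin))]
    simp
  · exact (isWeaklyRegular_singleton_iff M r).mpr
      (isSMulRegular_of_forall_isAssociatedPrime_eq hAss fun h => hrc (hPc h))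
  · rwa [Ideal.ofList_singleton, Ideal.span_singleton_le_iff_mem]

lemma SerreCondSn.exists_isWeaklyRegular_pair (hS2 : SerreCondSn 2 R M) {p : PrimeSpectrum R}
    (hp : Module.annihilator R M ≤ p.asIdeal)
    (hht : 1 < Order.height
      (⟨p, hp⟩ : {q : PrimeSpectrum R // Module.annihilator R M ≤ q.asIdeal})) :
    ∃ x ∈ p.asIdeal, ∃ y ∈ p.asIdeal, IsWeaklyRegular M [x, y] := by
  obtain ⟨rs, hlen, hmem, hreg⟩ := hS2 p hp
  rw [Nat.cast_ofNat, min_eq_left (one_add_one_eq_two (R := ℕ∞) ▸ Order.add_one_le_of_lt hht)]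
    at hlen
  obtain ⟨x, y, rfl⟩ := List.length_eq_two.mp (by exact_mod_cast hlen)
  exact ⟨x, hmem x (by simp), y, hmem y (by simp), hreg.toIsWeaklyRegular⟩

lemma exists_smul_eq_of_isWeaklyRegular_pair {π x y : R} (hπ : IsSMulRegular M π)
    (hxy : IsWeaklyRegular M [x, y]) {m m₁ m₂ : M} (hx : π • m₁ = x • m)
    (hy : π • m₂ = y • m) : ∃ m₃, π • m₃ = m := by
  obtain ⟨hxreg, hyreg⟩ := (isWeaklyRegular_cons_iff M x [y]).mp hxy
  rw [isWeaklyRegular_singleton_iff] at hyreg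
  have hswap : y • m₁ = x • m₂ := hπ <| by
    simp only [smul_comm π, hx, hy]
    exact smul_comm y x m
  obtain ⟨m₃, -, hm₃⟩ := (Submodule.mem_smul_pointwise_iff_exists _ _ _).mp <|
    mem_of_isSMulRegular_quotient_of_smul_mem hyreg
      (hswap ▸ Submodule.smul_mem_pointwise_smul m₂ x ⊤ trivial)
  refine ⟨m₃, hxreg ?_⟩
  simp only [← hx, ← hm₃, smul_comm π x]

lemma exists_mem_minimalPrimes_annihilator_lt [IsNoetherianRing R] [Module.Finite R M] {π : R}
    (hπ : IsSMulRegular M π) {P : Ideal R} [P.IsPrime] (hP : Module.annihilator R M ≤ P)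
    (hπP : π ∈ P) :
    ∃ q ∈ (Module.annihilator R M).minimalPrimes, q < P := by
  obtain ⟨q, hq, hqP⟩ := Ideal.exists_minimalPrimes_le hP
  refine ⟨q, hq, lt_of_le_of_ne hqP fun hqP => ?_⟩
  have hπ' : π ∈ ⋃ q ∈ associatedPrimes R M, (q : Set R) := Set.mem_biUnion
    (Module.associatedPrimes.minimalPrimes_annihilator_subset_associatedPrimes R M hq)
    (hqP ▸ hπP)
  rw [biUnion_associatedPrimes_eq_compl_regular] at hπ'
  exact hπ' hπ

lemma exists_sub_one_mem_and_mul_eq_zero [IsNoetherianRing R] {π a : R} (hπ : IsSMulRegular R π)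
    [hprime : (Ideal.span {π}).IsPrime] (ha : a ∉ Ideal.span {π}) :
    ∃ s, s - 1 ∈ Ideal.span {π} ∧ ∀ x, a * x = 0 → s * x = 0 := by
  set K := LinearMap.ker (LinearMap.mulLeft R a)
  -- `K = ann(a)` and `K = π • K`, because `(π)` is prime and `a ∉ (π)`; then apply Nakayama.
  have hK : K ≤ Ideal.span {π} • K := by
    intro x (hx : a * x = 0)
    obtain ⟨c, rfl⟩ := Ideal.mem_span_singleton'.mp <|
      (hprime.mem_or_mem (hx ▸ zero_mem _)).resolve_left ha
    have hc : a * c = 0 := hπ <| by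
      simp only [smul_eq_mul, mul_zero]
      rw [← hx]; ring
    rw [mul_comm]
    exact Submodule.smul_mem_smul (Ideal.mem_span_singleton_self π) hc
  obtain ⟨s, hs1, hs⟩ := Submodule.exists_sub_one_mem_and_smul_eq_zero_of_fg_of_le_smul
    (Ideal.span {π}) K (IsNoetherian.noetherian K) hK
  exact ⟨s, hs1, fun x hx => hs x hx⟩

lemma annihilator_le_span_singleton [IsNoetherianRing R] {π : R}
    (heval : Function.Injective (Module.Dual.eval R M)) (hπ : IsSMulRegular R π)
    [(Ideal.span {π}).IsPrime] (hne : (Ideal.span {π} • ⊤ : Submodule R M) ≠ ⊤) :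
    Module.annihilator R M ≤ Ideal.span {π} := by
  intro a ha
  by_contra haπ
  obtain ⟨s, hs1, hs⟩ := exists_sub_one_mem_and_mul_eq_zero hπ haπ
  -- `s` kills every `φ m`, hence every `m`, since `M` embeds into its double dual.
  have hsM : ∀ m : M, s • m = 0 := fun m => heval <| LinearMap.ext fun φ => by
    simpa using hs (φ m)
      (by rw [← smul_eq_mul, ← map_smul, Module.mem_annihilator.mp ha, map_zero])
  refine hne (eq_top_iff.mpr fun m _ => ?_)
  have hm : m = -((s - 1) • m) := by rw [sub_smul, one_smul, hsM, zero_sub, neg_neg]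
  rw [hm]
  exact Submodule.neg_mem _ (Submodule.smul_mem_smul hs1 trivial)

lemma IsAssociatedPrime.eq_span_singleton_of_serreCondSn_two [IsNoetherianRing R]
    [Module.Finite R M] {π : R} [(Ideal.span {π}).IsPrime] (hRreg : IsSMulRegular R π)
    (hMreg : IsSMulRegular M π) (heval : Function.Injective (Module.Dual.eval R M))
    (hS2 : SerreCondSn 2 R M) {q : Ideal R}
    (hq : IsAssociatedPrime q (M ⧸ (Ideal.span {π} • ⊤ : Submodule R M))) :
    q = Ideal.span {π} := by
  obtain ⟨hqprime, x, hxq⟩ := isAssociatedPrime_iff.mp hq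
  obtain ⟨m, rfl⟩ := Submodule.Quotient.mk_surjective _ x
  have hmem (z : R) : z ∈ q ↔ ∃ m', π • m' = z • m := by
    rw [hxq, Submodule.mem_colon_singleton, Submodule.mem_bot, ← Submodule.Quotient.mk_smul,
      Submodule.Quotient.mk_eq_zero, mem_span_singleton_smul_top_iff]
  have hπq : Ideal.span {π} ≤ q :=
    (Ideal.span_singleton_le_iff_mem q).mpr ((hmem π).mpr ⟨m, rfl⟩)
  have hm : m ∉ (Ideal.span {π} • ⊤ : Submodule R M) := fun h => by
    obtain ⟨m', hm'⟩ := mem_span_singleton_smul_top_iff.mp h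
    exact hqprime.ne_top (q.eq_top_iff_one.mpr ((hmem 1).mpr ⟨m', by rw [hm', one_smul]⟩))
  refine (eq_of_le_of_not_lt hπq fun hlt => hm ?_).symm
  have hann := annihilator_le_span_singleton heval hRreg fun h => hm (by rw [h]; trivial)
  obtain ⟨q', hq', hq'lt⟩ :=
    exists_mem_minimalPrimes_annihilator_lt hMreg hann (Ideal.mem_span_singleton_self π)
  have hht : 1 < Order.height (⟨⟨q, hqprime⟩, hann.trans hπq⟩ :
      {p : PrimeSpectrum R // Module.annihilator R M ≤ p.asIdeal}) :=
    Order.one_lt_height_iff.mpr ⟨⟨⟨Ideal.span {π}, inferInstance⟩, hann⟩,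
      ⟨⟨q', hq'.1.1⟩, hq'.1.2⟩, hq'lt, hlt⟩
  obtain ⟨x, hx, y, hy, hxy⟩ := hS2.exists_isWeaklyRegular_pair _ hht
  obtain ⟨m₁, hm₁⟩ := (hmem x).mp hx
  obtain ⟨m₂, hm₂⟩ := (hmem y).mp hy
  exact mem_span_singleton_smul_top_iff.mpr
    (exists_smul_eq_of_isWeaklyRegular_pair hMreg hxy hm₁ hm₂)

end

theorem stmt16_general {V : Type*} [CommRing V] [IsDomain V] (ϖ : V)
    (hϖ : Irreducible ϖ)
    {R : Type*} [CommRing R] [IsNoetherianRing R] [Algebra V R] [Module.Flat V R]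
    (M : Type*) [AddCommGroup M] [Module R M] [Module.Finite R M]
    (hrefl : Function.Bijective (Module.Dual.eval R M))
    (hS2 : SerreCondSn 2 R M)
    (hMreg : IsSMulRegular M (algebraMap V R ϖ))
    (hdom : IsDomain (R ⧸ Ideal.span {algebraMap V R ϖ})) :
    SerreCondSn 1 R (M ⧸ (Ideal.span {algebraMap V R ϖ} • ⊤ : Submodule R M)) ∧
    ∀ r : R,
      IsSMulRegular (R ⧸ Ideal.span {algebraMap V R ϖ})
        (Ideal.Quotient.mk (Ideal.span {algebraMap V R ϖ}) r) →
      IsSMulRegular (M ⧸ (Ideal.span {algebraMap V R ϖ} • ⊤ : Submodule R M)) r := by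
  have := (Ideal.Quotient.isDomain_iff_prime _).mp hdom
  have hRreg : IsSMulRegular R (algebraMap V R ϖ) :=
    (IsLeftRegular.isSMulRegular (IsRegular.of_ne_zero hϖ.ne_zero).left).of_flat
  have hAss (q : Ideal R) := IsAssociatedPrime.eq_span_singleton_of_serreCondSn_two (q := q)
    hRreg hMreg hrefl.injective hS2
  refine ⟨serreCondSn_one_of_forall_isAssociatedPrime_eq hAss, fun r hr => ?_⟩
  refine isSMulRegular_of_forall_isAssociatedPrime_eq hAss fun hrπ => ?_
  rw [Ideal.Quotient.eq_zero_iff_mem.mpr hrπ, IsSMulRegular.zero_iff_subsingleton] at hr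
  exact not_subsingleton _ hr

/-- A reflexive (hence `S₂`) coherent module over a Noetherian ring flat over a DVR,
on which the uniformizer `ϖ` acts regularly, has quotient `M/ϖM` satisfying `S₁`;
hence `M/ϖM` is torsion-free (over the integral special fiber). -/
theorem stmt16 {V : Type*} [CommRing V] [IsDomain V] [IsDiscreteValuationRing V] (ϖ : V)
    (hϖ : Irreducible ϖ)
    {R : Type*} [CommRing R] [IsNoetherianRing R] [Algebra V R] [Module.Flat V R]
    (M : Type*) [AddCommGroup M] [Module R M] [Module.Finite R M]
    (hrefl : Function.Bijective (Module.Dual.eval R M))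
    (hS2 : SerreCondSn 2 R M)
    (hMreg : IsSMulRegular M (algebraMap V R ϖ))
    (hdom : IsDomain (R ⧸ Ideal.span {algebraMap V R ϖ})) :
    SerreCondSn 1 R (M ⧸ (Ideal.span {algebraMap V R ϖ} • ⊤ : Submodule R M)) ∧
    ∀ r : R,
      IsSMulRegular (R ⧸ Ideal.span {algebraMap V R ϖ})
        (Ideal.Quotient.mk (Ideal.span {algebraMap V R ϖ}) r) →
      IsSMulRegular (M ⧸ (Ideal.span {algebraMap V R ϖ} • ⊤ : Submodule R M)) r :=
  stmt16_general ϖ hϖ M hrefl hS2 hMreg hdom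
end
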